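/- arXiv:1107.5251 — 2 statements merged into one kernel-verified Lean document; each statement's English description precedes it below -/
import Mathlib

section
/- Let d ≥ 1 and let 0 < α, γ < d/2 and 0 < β < d be real numbers such that d/2 < α + β < d and α + β + γ > d. Then the integral operator on L²(ℝ^d) with kernel k(x,y) = ⟨x⟩^{-α} |x-y|^{-β} ⟨y⟩^{-γ} is bounded on L²(ℝ^d), where ⟨x⟩ = (1+|x|²)^{1/2}. -/
/-!
Schur's test with the weight `w(x) = ⟨x⟩^{-d/2}`: if `∫ k(x,y) w(y) dy ≤ A w(x)` and
`∫ k(x,y) w(x) dx ≤ B w(y)`, then Cauchy–Schwarz and Tonelli give `‖T u‖₂² ≤ A B ‖u‖₂²`.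
Both conditions reduce to the estimate `∫ |x-y|^{-β} ⟨y⟩^{-ν} dy ≲ ⟨x⟩^{d-β-ν}` for
`0 < β < d` and `0 ≤ ν < d < β + ν`, taken with `ν = γ + d/2` resp. `ν = α + d/2`; the
powers of `⟨x⟩` then combine to at most `⟨x⟩^{-d/2}` because `α + β + γ ≥ d`.
For the estimate, split `ℝ^d` into `|y - x| ≤ ⟨x⟩/2`, `|y| ≤ 2⟨x⟩` and `|y| > 2⟨x⟩`: on each
piece one factor is bounded by a power of `⟨x⟩`, and the other one integrates, by scaling, to a
power of the radius.
-/

open MeasureTheory Metric Set Module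
open scoped ENNReal Pointwise

section JapaneseBracket

variable {E : Type*} [NormedAddCommGroup E]

noncomputable def japaneseBracket (x : E) : ℝ := √(1 + ‖x‖ ^ 2)

theorem one_le_japaneseBracket (x : E) : 1 ≤ japaneseBracket x :=
  Real.one_le_sqrt.mpr (le_add_of_nonneg_right (by positivity))

theorem japaneseBracket_pos (x : E) : 0 < japaneseBracket x :=
  zero_lt_one.trans_le (one_le_japaneseBracket x)

theorem norm_le_japaneseBracket (x : E) : ‖x‖ ≤ japaneseBracket x :=
  Real.le_sqrt_of_sq_le (le_add_of_nonneg_left zero_le_one)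

theorem japaneseBracket_le_one_add_norm (x : E) : japaneseBracket x ≤ 1 + ‖x‖ :=
  Real.sqrt_le_iff.mpr ⟨by positivity, by nlinarith [norm_nonneg x]⟩

theorem one_add_norm_sq_rpow_half (x : E) (s : ℝ) :
    (1 + ‖x‖ ^ 2) ^ (s / 2) = japaneseBracket x ^ s := by
  rw [japaneseBracket, Real.sqrt_eq_rpow, ← Real.rpow_mul (by positivity)]
  ring_nf

@[fun_prop]
theorem measurable_japaneseBracket [MeasurableSpace E] [OpensMeasurableSpace E] :
    Measurable (japaneseBracket : E → ℝ) := by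
  unfold japaneseBracket
  fun_prop

/- Near the singularity (`‖y - x‖ ≤ ⟨x⟩/2`) the weight is controlled by `⟨y⟩ ≥ ⟨x⟩/4`; in the
middle region (`‖y‖ ≤ 2⟨x⟩`) the singular factor is at most `(⟨x⟩/2)^(-β)`; far out one has
`‖x - y‖ ≥ ‖y‖/2`. -/
theorem rpow_neg_norm_sub_mul_japaneseBracket_le {β ν : ℝ} (hβ : 0 ≤ β) (hν : 0 ≤ ν)
    (x y : E) :
    ENNReal.ofReal (‖x - y‖ ^ (-β) * japaneseBracket y ^ (-ν)) ≤
      ENNReal.ofReal ((japaneseBracket x / 4) ^ (-ν)) *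
          (closedBall 0 (japaneseBracket x / 2)).indicator
            (fun z => ENNReal.ofReal (‖z‖ ^ (-β))) (y - x) +
        ENNReal.ofReal ((japaneseBracket x / 2) ^ (-β)) *
          (closedBall 0 (2 * japaneseBracket x)).indicator
            (fun z => ENNReal.ofReal (japaneseBracket z ^ (-ν))) y +
        ENNReal.ofReal (2 ^ β) *
          (closedBall 0 (2 * japaneseBracket x))ᶜ.indicator
            (fun z => ENNReal.ofReal (‖z‖ ^ (-(β + ν)))) y := by
  set b := japaneseBracket x
  have hb : 0 < b := japaneseBracket_pos x
  have hxb : b ≤ 1 + ‖x‖ := japaneseBracket_le_one_add_norm x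
  have hy_le := norm_le_japaneseBracket y
  have hy_nonneg : 0 ≤ japaneseBracket y ^ (-ν) := Real.rpow_nonneg (japaneseBracket_pos y).le _
  rcases le_or_gt ‖y - x‖ (b / 2) with hnear | hfar
  · refine le_add_right (le_add_right ?_)
    have hby : b / 4 ≤ japaneseBracket y := by
      linarith [one_le_japaneseBracket y, norm_sub_norm_le x y, norm_sub_rev x y]
    rw [indicator_of_mem (mem_closedBall_zero_iff.mpr hnear),
      ← ENNReal.ofReal_mul (by positivity), norm_sub_rev y x, mul_comm ((b / 4) ^ (-ν))]
    exact ENNReal.ofReal_le_ofReal <| mul_le_mul_of_nonneg_left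
      (Real.rpow_le_rpow_of_nonpos (by positivity) hby (neg_nonpos.mpr hν)) (by positivity)
  rw [norm_sub_rev] at hfar
  rcases le_or_gt ‖y‖ (2 * b) with hmid | htail
  · refine le_add_right (le_add_left ?_)
    rw [indicator_of_mem (mem_closedBall_zero_iff.mpr hmid), ← ENNReal.ofReal_mul (by positivity)]
    exact ENNReal.ofReal_le_ofReal <| mul_le_mul_of_nonneg_right
      (Real.rpow_le_rpow_of_nonpos (by positivity) hfar.le (neg_nonpos.mpr hβ)) hy_nonneg
  · refine le_add_left ?_
    have hy : 0 < ‖y‖ := by linarith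
    have hxy : ‖y‖ / 2 ≤ ‖x - y‖ := by
      linarith [norm_le_japaneseBracket x, norm_sub_norm_le y x, norm_sub_rev x y]
    rw [indicator_of_mem (by simpa using htail), ← ENNReal.ofReal_mul (by positivity)]
    refine ENNReal.ofReal_le_ofReal ?_
    calc ‖x - y‖ ^ (-β) * japaneseBracket y ^ (-ν) ≤ (‖y‖ / 2) ^ (-β) * ‖y‖ ^ (-ν) :=
          mul_le_mul (Real.rpow_le_rpow_of_nonpos (by positivity) hxy (neg_nonpos.mpr hβ))
            (Real.rpow_le_rpow_of_nonpos hy hy_le (neg_nonpos.mpr hν)) hy_nonneg (by positivity)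
      _ = 2 ^ β * ‖y‖ ^ (-(β + ν)) := by
          rw [Real.div_rpow hy.le zero_le_two, Real.rpow_neg zero_le_two β, div_inv_eq_mul,
            neg_add, Real.rpow_add hy]
          ring

end JapaneseBracket

section Balls

variable {E : Type*} [NormedAddCommGroup E] [NormedSpace ℝ E]

theorem smul_closedUnitBall_of_pos {R : ℝ} (hR : 0 < R) :
    R • closedBall (0 : E) 1 = closedBall 0 R := by
  rw [smul_closedBall' hR.ne', smul_zero, Real.norm_of_nonneg hR.le, mul_one]

theorem smul_compl_closedUnitBall_of_pos {R : ℝ} (hR : 0 < R) :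
    R • (closedBall (0 : E) 1)ᶜ = (closedBall 0 R)ᶜ := by
  rw [compl_eq_univ_sdiff, compl_eq_univ_sdiff, smul_set_sdiff₀ hR.ne', smul_set_univ₀ hR.ne',
    smul_closedUnitBall_of_pos hR]

end Balls

section HaarScaling

variable {E : Type*} [NormedAddCommGroup E] [NormedSpace ℝ E] [FiniteDimensional ℝ E]
  [MeasurableSpace E] [BorelSpace E] (μ : Measure E) [μ.IsAddHaarMeasure]

theorem setLIntegral_smul_set_eq (f : E → ℝ≥0∞) {S : Set E} (hS : MeasurableSet S)
    {R : ℝ} (hR : 0 < R) :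
    ∫⁻ z in R • S, f z ∂μ = ENNReal.ofReal (R ^ finrank ℝ E) * ∫⁻ z in S, f (R • z) ∂μ := by
  have hind : ∀ z, S.indicator (fun z => f (R • z)) z = (R • S).indicator f (R • z) := by
    intro z
    by_cases hz : z ∈ S
    · simp [hz, (Set.smul_mem_smul_set_iff₀ hR.ne' S z).mpr hz]
    · simp [hz, (Set.smul_mem_smul_set_iff₀ hR.ne' S z).not.mpr hz]
  have hmap := lintegral_map_equiv ((R • S).indicator f) (MeasurableEquiv.smul₀ R hR.ne') (μ := μ)
  rw [MeasurableEquiv.coe_smul₀, Measure.map_addHaar_smul μ hR.ne', lintegral_smul_measure,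
    abs_of_pos (by positivity), smul_eq_mul] at hmap
  rw [← lintegral_indicator hS, ← lintegral_indicator (hS.const_smul₀ R)]
  simp_rw [hind]
  rw [← hmap, ← mul_assoc, ← ENNReal.ofReal_mul (by positivity),
    mul_inv_cancel₀ (by positivity), ENNReal.ofReal_one, one_mul]

theorem setLIntegral_rpow_norm_smul_set (s : ℝ) {S : Set E} (hS : MeasurableSet S)
    {R : ℝ} (hR : 0 < R) :
    ∫⁻ z in R • S, ENNReal.ofReal (‖z‖ ^ s) ∂μ =
      ENNReal.ofReal (R ^ (finrank ℝ E + s)) * ∫⁻ z in S, ENNReal.ofReal (‖z‖ ^ s) ∂μ := by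
  simp_rw [setLIntegral_smul_set_eq μ _ hS hR, norm_smul, Real.norm_of_nonneg hR.le,
    Real.mul_rpow hR.le (norm_nonneg _), ENNReal.ofReal_mul (Real.rpow_nonneg hR.le _)]
  rw [lintegral_const_mul' _ _ ENNReal.ofReal_ne_top, ← mul_assoc,
    ← ENNReal.ofReal_mul (by positivity), Real.rpow_add hR, Real.rpow_natCast]

theorem setLIntegral_closedBall_rpow_neg_norm_lt_top [Nontrivial E] {β : ℝ}
    (hβ : β < finrank ℝ E) (r : ℝ) :
    ∫⁻ z in closedBall 0 r, ENNReal.ofReal (‖z‖ ^ (-β)) ∂μ < ∞ := by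
  have hint : IntegrableOn (fun z : E => ‖z‖ ^ (-β)) (ball 0 (r + 1)) μ :=
    integrableOn_ball_of_norm_le_rpow (C := 1) finrank_pos hβ
      (Filter.Eventually.of_forall fun z => by rw [one_mul, Real.norm_of_nonneg (by positivity)])
      (measurable_norm.pow_const _).aestronglyMeasurable
  exact (lintegral_mono_set (closedBall_subset_ball (lt_add_one r))).trans_lt
    hint.lintegral_lt_top

theorem setLIntegral_compl_closedBall_rpow_neg_norm_lt_top {ρ : ℝ} (hρ : finrank ℝ E < ρ) :
    ∫⁻ z in (closedBall 0 1)ᶜ, ENNReal.ofReal (‖z‖ ^ (-ρ)) ∂μ < ∞ := by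
  have hρ₀ : 0 < ρ := (Nat.cast_nonneg _).trans_lt hρ
  have hle : ∀ z ∈ (closedBall (0 : E) 1)ᶜ, ENNReal.ofReal (‖z‖ ^ (-ρ)) ≤
      ENNReal.ofReal (2 ^ ρ) * ENNReal.ofReal ((1 + ‖z‖) ^ (-ρ)) := by
    intro z hz
    have hz1 : 1 < ‖z‖ := by simpa using hz
    rw [← ENNReal.ofReal_mul (by positivity)]
    refine ENNReal.ofReal_le_ofReal ?_
    calc ‖z‖ ^ (-ρ) ≤ ((1 + ‖z‖) / 2) ^ (-ρ) :=
          Real.rpow_le_rpow_of_nonpos (by positivity) (by linarith) (by linarith)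
      _ = 2 ^ ρ * (1 + ‖z‖) ^ (-ρ) := by
          rw [Real.div_rpow (by positivity) zero_le_two, Real.rpow_neg zero_le_two,
            div_inv_eq_mul, mul_comm]
  calc _ ≤ ∫⁻ z in (closedBall (0 : E) 1)ᶜ,
        ENNReal.ofReal (2 ^ ρ) * ENNReal.ofReal ((1 + ‖z‖) ^ (-ρ)) ∂μ :=
        setLIntegral_mono (by fun_prop) hle
    _ ≤ ENNReal.ofReal (2 ^ ρ) * ∫⁻ z, ENNReal.ofReal ((1 + ‖z‖) ^ (-ρ)) ∂μ := by
        rw [← lintegral_const_mul' _ _ ENNReal.ofReal_ne_top]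
        exact setLIntegral_le_lintegral _ _
    _ < ∞ := ENNReal.mul_lt_top ENNReal.ofReal_lt_top (finite_integral_one_add_norm hρ)

-- Only almost everywhere: `Real.rpow` gives `‖0‖ ^ (-ν) = 0` when `ν ≠ 0`.
theorem setLIntegral_japaneseBracket_rpow_neg_le [Nontrivial E] {ν : ℝ} (hν : 0 ≤ ν)
    (S : Set E) :
    ∫⁻ z in S, ENNReal.ofReal (japaneseBracket z ^ (-ν)) ∂μ ≤
      ∫⁻ z in S, ENNReal.ofReal (‖z‖ ^ (-ν)) ∂μ := by
  refine lintegral_mono_ae (ae_restrict_of_ae ((Measure.ae_ne μ 0).mono fun z hz => ?_))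
  exact ENNReal.ofReal_le_ofReal <| Real.rpow_le_rpow_of_nonpos (norm_pos_iff.mpr hz)
    (norm_le_japaneseBracket z) (neg_nonpos.mpr hν)

theorem lintegral_rpow_neg_norm_sub_mul_japaneseBracket_le_sum [Nontrivial E] {β ν : ℝ}
    (hβ : 0 ≤ β) (hν : 0 ≤ ν) (x : E) :
    ∫⁻ y, ENNReal.ofReal (‖x - y‖ ^ (-β) * japaneseBracket y ^ (-ν)) ∂μ ≤
      ENNReal.ofReal ((japaneseBracket x / 4) ^ (-ν)) *
          ∫⁻ z in closedBall 0 (japaneseBracket x / 2), ENNReal.ofReal (‖z‖ ^ (-β)) ∂μ +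
        ENNReal.ofReal ((japaneseBracket x / 2) ^ (-β)) *
          ∫⁻ z in closedBall 0 (2 * japaneseBracket x), ENNReal.ofReal (‖z‖ ^ (-ν)) ∂μ +
        ENNReal.ofReal (2 ^ β) *
          ∫⁻ z in (closedBall 0 (2 * japaneseBracket x))ᶜ,
            ENNReal.ofReal (‖z‖ ^ (-(β + ν))) ∂μ := by
  set b := japaneseBracket x
  calc _ ≤ ∫⁻ y, (ENNReal.ofReal ((b / 4) ^ (-ν)) *
            (closedBall 0 (b / 2)).indicator (fun z => ENNReal.ofReal (‖z‖ ^ (-β))) (y - x) +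
          ENNReal.ofReal ((b / 2) ^ (-β)) * (closedBall 0 (2 * b)).indicator
            (fun z => ENNReal.ofReal (japaneseBracket z ^ (-ν))) y +
          ENNReal.ofReal (2 ^ β) * (closedBall 0 (2 * b))ᶜ.indicator
            (fun z => ENNReal.ofReal (‖z‖ ^ (-(β + ν)))) y) ∂μ :=
        lintegral_mono fun y => rpow_neg_norm_sub_mul_japaneseBracket_le hβ hν x y
    _ = ENNReal.ofReal ((b / 4) ^ (-ν)) *
            ∫⁻ z in closedBall 0 (b / 2), ENNReal.ofReal (‖z‖ ^ (-β)) ∂μ +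
          ENNReal.ofReal ((b / 2) ^ (-β)) *
            ∫⁻ z in closedBall 0 (2 * b), ENNReal.ofReal (japaneseBracket z ^ (-ν)) ∂μ +
          ENNReal.ofReal (2 ^ β) *
            ∫⁻ z in (closedBall 0 (2 * b))ᶜ, ENNReal.ofReal (‖z‖ ^ (-(β + ν))) ∂μ := by
        rw [lintegral_add_left (by fun_prop (disch := measurability)),
          lintegral_add_left (by fun_prop (disch := measurability)),
          lintegral_const_mul _ (by fun_prop (disch := measurability)),
          lintegral_const_mul _ (by fun_prop (disch := measurability)),
          lintegral_const_mul _ (by fun_prop (disch := measurability)),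
          lintegral_sub_right_eq_self (fun y => (closedBall 0 (b / 2)).indicator _ y) x,
          lintegral_indicator measurableSet_closedBall,
          lintegral_indicator measurableSet_closedBall,
          lintegral_indicator measurableSet_closedBall.compl]
    _ ≤ _ := by
        gcongr _ + _ * ?_ + _
        exact setLIntegral_japaneseBracket_rpow_neg_le μ hν _

theorem lintegral_rpow_neg_norm_sub_mul_japaneseBracket_le {β ν : ℝ} (hβ₀ : 0 < β)
    (hβ : β < finrank ℝ E) (hν₀ : 0 ≤ ν) (hν : ν < finrank ℝ E) (hβν : finrank ℝ E < β + ν) :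
    ∃ C ≠ ∞, ∀ x : E, ∫⁻ y, ENNReal.ofReal (‖x - y‖ ^ (-β) * japaneseBracket y ^ (-ν)) ∂μ ≤
      C * ENNReal.ofReal (japaneseBracket x ^ (finrank ℝ E - β - ν)) := by
  have : Nontrivial E := Module.nontrivial_of_finrank_pos (by exact_mod_cast hβ₀.trans hβ)
  set n : ℝ := (finrank ℝ E : ℝ)
  set I := ∫⁻ z in closedBall (0 : E) 1, ENNReal.ofReal (‖z‖ ^ (-β)) ∂μ
  set I' := ∫⁻ z in closedBall (0 : E) 1, ENNReal.ofReal (‖z‖ ^ (-ν)) ∂μ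
  set J := ∫⁻ z in (closedBall (0 : E) 1)ᶜ, ENNReal.ofReal (‖z‖ ^ (-(β + ν))) ∂μ
  have hI : I ≠ ∞ := (setLIntegral_closedBall_rpow_neg_norm_lt_top μ hβ 1).ne
  have hI' : I' ≠ ∞ := (setLIntegral_closedBall_rpow_neg_norm_lt_top μ hν 1).ne
  have hJ : J ≠ ∞ := (setLIntegral_compl_closedBall_rpow_neg_norm_lt_top μ hβν).ne
  refine ⟨ENNReal.ofReal ((4 ^ (-ν) * 2 ^ (n + -β))⁻¹) * I +
      ENNReal.ofReal (2 ^ β * 2 ^ (n + -ν)) * I' +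
      ENNReal.ofReal (2 ^ β * 2 ^ (n + -(β + ν))) * J, by finiteness, fun x =>
    (lintegral_rpow_neg_norm_sub_mul_japaneseBracket_le_sum μ hβ₀.le hν₀ x).trans_eq ?_⟩
  set b := japaneseBracket x
  have hb : 0 < b := japaneseBracket_pos x
  have e₁ : (b / 4) ^ (-ν) * (b / 2) ^ (n + -β) =
      (4 ^ (-ν) * 2 ^ (n + -β))⁻¹ * b ^ (n - β - ν) := by
    rw [show n - β - ν = -ν + (n + -β) by ring, Real.rpow_add hb,
      Real.div_rpow hb.le (by norm_num), Real.div_rpow hb.le (by norm_num)]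
    ring
  have e₂ : (b / 2) ^ (-β) * (2 * b) ^ (n + -ν) = 2 ^ β * 2 ^ (n + -ν) * b ^ (n - β - ν) := by
    rw [show n - β - ν = -β + (n + -ν) by ring, Real.rpow_add hb,
      Real.div_rpow hb.le (by norm_num), Real.mul_rpow (by norm_num) hb.le,
      Real.rpow_neg zero_le_two, div_inv_eq_mul]
    ring
  have e₃ : 2 ^ β * (2 * b) ^ (n + -(β + ν)) =
      2 ^ β * 2 ^ (n + -(β + ν)) * b ^ (n - β - ν) := by
    rw [show n - β - ν = n + -(β + ν) by ring, Real.mul_rpow (by norm_num) hb.le]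
    ring
  rw [← smul_compl_closedUnitBall_of_pos (by positivity : 0 < 2 * b),
    ← smul_closedUnitBall_of_pos (by positivity : 0 < b / 2),
    ← smul_closedUnitBall_of_pos (by positivity : 0 < 2 * b),
    setLIntegral_rpow_norm_smul_set μ _ measurableSet_closedBall (by positivity),
    setLIntegral_rpow_norm_smul_set μ _ measurableSet_closedBall (by positivity),
    setLIntegral_rpow_norm_smul_set μ _ measurableSet_closedBall.compl (by positivity),
    ← mul_assoc, ← mul_assoc, ← mul_assoc, ← ENNReal.ofReal_mul (by positivity),
    ← ENNReal.ofReal_mul (by positivity), ← ENNReal.ofReal_mul (by positivity), e₁, e₂, e₃]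
  simp only [ENNReal.ofReal_mul' (Real.rpow_nonneg hb.le _)]
  ring

end HaarScaling

section Schur

variable {X : Type*} [MeasurableSpace X] {μ : Measure X}

theorem lintegral_mul_sq_le_of_weight {g f w : X → ℝ≥0∞} (hg : AEMeasurable g μ)
    (hf : AEMeasurable f μ) (hw : AEMeasurable w μ) (hw0 : ∀ y, w y ≠ 0) (hwt : ∀ y, w y ≠ ∞) :
    (∫⁻ y, g y * f y ∂μ) ^ 2 ≤ (∫⁻ y, g y * w y ∂μ) * ∫⁻ y, g y * (w y)⁻¹ * f y ^ 2 ∂μ := by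
  have hsplit : ∀ y,
      g y * f y = (g y * w y) ^ (2⁻¹ : ℝ) * ((g y * (w y)⁻¹) ^ (2⁻¹ : ℝ) * f y) := by
    intro y
    rw [← mul_assoc, ← ENNReal.mul_rpow_of_nonneg _ _ (by norm_num),
      show g y * w y * (g y * (w y)⁻¹) = g y ^ 2 * (w y * (w y)⁻¹) by ring,
      ENNReal.mul_inv_cancel (hw0 y) (hwt y), mul_one, ← ENNReal.rpow_natCast,
      ← ENNReal.rpow_mul]
    norm_num
  have hsq : ∀ a : ℝ≥0∞, (a ^ (2⁻¹ : ℝ)) ^ (2 : ℝ) = a := fun a => by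
    rw [← ENNReal.rpow_mul]; norm_num
  have holder := ENNReal.lintegral_mul_le_Lp_mul_Lq μ Real.HolderConjugate.two_two
    ((hg.mul hw).pow_const (2⁻¹ : ℝ)) (((hg.mul hw.inv).pow_const (2⁻¹ : ℝ)).mul hf)
  simp only [Pi.mul_apply, Pi.inv_apply, ENNReal.mul_rpow_of_nonneg _ _ zero_le_two, hsq,
    ← hsplit] at holder
  calc (∫⁻ y, g y * f y ∂μ) ^ 2
      ≤ ((∫⁻ y, g y * w y ∂μ) ^ (1 / 2 : ℝ) *
          (∫⁻ y, g y * (w y)⁻¹ * f y ^ (2 : ℝ) ∂μ) ^ (1 / 2 : ℝ)) ^ 2 := by gcongr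
    _ = (∫⁻ y, g y * w y ∂μ) * ∫⁻ y, g y * (w y)⁻¹ * f y ^ 2 ∂μ := by
        rw [mul_pow, ← ENNReal.rpow_natCast, ← ENNReal.rpow_natCast, ← ENNReal.rpow_mul,
          ← ENNReal.rpow_mul]
        norm_num

theorem lintegral_sq_lintegral_le_of_schur [SFinite μ] {K : X → X → ℝ≥0∞}
    (hK : Measurable (Function.uncurry K)) {w : X → ℝ≥0∞} (hw : Measurable w)
    (hw0 : ∀ x, w x ≠ 0) (hwt : ∀ x, w x ≠ ∞) {A B : ℝ≥0∞}
    (h₁ : ∀ x, ∫⁻ y, K x y * w y ∂μ ≤ A * w x) (h₂ : ∀ y, ∫⁻ x, K x y * w x ∂μ ≤ B * w y)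
    {f : X → ℝ≥0∞} (hf : Measurable f) :
    ∫⁻ x, (∫⁻ y, K x y * f y ∂μ) ^ 2 ∂μ ≤ A * B * ∫⁻ y, f y ^ 2 ∂μ := by
  have hKx : ∀ x, Measurable (K x) := fun x => hK.comp measurable_prodMk_left
  have hG : Measurable fun x => ∫⁻ y, K x y * (w y)⁻¹ * f y ^ 2 ∂μ :=
    Measurable.lintegral_prod_right' (f := fun p : X × X => K p.1 p.2 * (w p.2)⁻¹ * f p.2 ^ 2)
      (by fun_prop)
  have hmeas : Measurable fun p : X × X => w p.1 * (K p.1 p.2 * (w p.2)⁻¹ * f p.2 ^ 2) := by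
    fun_prop
  calc ∫⁻ x, (∫⁻ y, K x y * f y ∂μ) ^ 2 ∂μ
      ≤ ∫⁻ x, A * (w x * ∫⁻ y, K x y * (w y)⁻¹ * f y ^ 2 ∂μ) ∂μ := by
        refine lintegral_mono fun x => ?_
        rw [← mul_assoc]
        exact (lintegral_mul_sq_le_of_weight (hKx x).aemeasurable hf.aemeasurable
          hw.aemeasurable hw0 hwt).trans (mul_le_mul_left (h₁ x) _)
    _ = A * ∫⁻ x, ∫⁻ y, w x * (K x y * (w y)⁻¹ * f y ^ 2) ∂μ ∂μ := by
        rw [lintegral_const_mul _ (by fun_prop)]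
        simp_rw [lintegral_const_mul' _ _ (hwt _)]
    _ = A * ∫⁻ y, (∫⁻ x, K x y * w x ∂μ) * ((w y)⁻¹ * f y ^ 2) ∂μ := by
        rw [lintegral_lintegral_swap hmeas.aemeasurable]
        congr 1
        refine lintegral_congr fun y => ?_
        rw [← lintegral_mul_const _ (by fun_prop)]
        exact lintegral_congr fun x => by ring
    _ ≤ A * ∫⁻ y, B * w y * ((w y)⁻¹ * f y ^ 2) ∂μ := by
        gcongr with y
        exact h₂ y
    _ = A * B * ∫⁻ y, f y ^ 2 ∂μ := by
        rw [mul_assoc]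
        congr 1
        rw [← lintegral_const_mul _ (by fun_prop)]
        refine lintegral_congr fun y => ?_
        rw [mul_assoc, ← mul_assoc (w y), ENNReal.mul_inv_cancel (hw0 y) (hwt y), one_mul]

theorem eLpNorm_integral_smul_le_of_schur [SFinite μ] {F : Type*} [NormedAddCommGroup F]
    [NormedSpace ℝ F] {k : X → X → ℝ} (hk : Measurable (Function.uncurry k)) {w : X → ℝ≥0∞}
    (hw : Measurable w) (hw0 : ∀ x, w x ≠ 0) (hwt : ∀ x, w x ≠ ∞) {A B : ℝ≥0∞}
    (h₁ : ∀ x, ∫⁻ y, ‖k x y‖ₑ * w y ∂μ ≤ A * w x)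
    (h₂ : ∀ y, ∫⁻ x, ‖k x y‖ₑ * w x ∂μ ≤ B * w y)
    {u : X → F} (hu : AEStronglyMeasurable u μ) :
    eLpNorm (fun x => ∫ y, k x y • u y ∂μ) 2 μ ≤ (A * B) ^ (2⁻¹ : ℝ) * eLpNorm u 2 μ := by
  obtain ⟨f, hf, hfu⟩ : ∃ f : X → ℝ≥0∞, Measurable f ∧ (fun y => ‖u y‖ₑ) =ᵐ[μ] f :=
    ⟨_, hu.enorm.measurable_mk, hu.enorm.ae_eq_mk⟩
  have hpt : ∀ x, ‖∫ y, k x y • u y ∂μ‖ₑ ≤ ∫⁻ y, ‖k x y‖ₑ * f y ∂μ := fun x =>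
    (enorm_integral_le_lintegral_enorm _).trans_eq <|
      lintegral_congr_ae (hfu.mono fun y hy => by simp only [enorm_smul, hy])
  have hschur := lintegral_sq_lintegral_le_of_schur (K := fun x y => ‖k x y‖ₑ) (by fun_prop)
    hw hw0 hwt h₁ h₂ hf
  have hf_sq : ∫⁻ y, f y ^ 2 ∂μ = ∫⁻ y, ‖u y‖ₑ ^ 2 ∂μ :=
    lintegral_congr_ae (hfu.mono fun y hy => by simp only [hy])
  rw [eLpNorm_eq_lintegral_rpow_enorm_toReal two_ne_zero ENNReal.ofNat_ne_top,
    eLpNorm_eq_lintegral_rpow_enorm_toReal two_ne_zero ENNReal.ofNat_ne_top]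
  simp only [ENNReal.toReal_ofNat, ENNReal.rpow_two, one_div]
  rw [← ENNReal.mul_rpow_of_nonneg _ _ (by norm_num), ← hf_sq]
  gcongr
  exact (lintegral_mono fun x => by gcongr; exact hpt x).trans hschur

end Schur

section WeightedRieszKernel

variable {E : Type*} [NormedAddCommGroup E]

noncomputable def weightedRieszKernel (a β c : ℝ) (x y : E) : ℝ :=
  japaneseBracket x ^ (-a) * ‖x - y‖ ^ (-β) * japaneseBracket y ^ (-c)

theorem weightedRieszKernel_swap (a β c : ℝ) (x y : E) :
    weightedRieszKernel a β c y x = weightedRieszKernel c β a x y := by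
  rw [weightedRieszKernel, weightedRieszKernel, norm_sub_rev]
  ring

variable [NormedSpace ℝ E] [FiniteDimensional ℝ E] [MeasurableSpace E] [BorelSpace E]
  (μ : Measure E) [μ.IsAddHaarMeasure]

theorem lintegral_enorm_weightedRieszKernel_mul_le {a β c : ℝ} (hβ₀ : 0 < β)
    (hβ : β < finrank ℝ E) (hc : c < finrank ℝ E / 2)
    (hβc : finrank ℝ E / 2 < β + c) (habc : finrank ℝ E ≤ a + β + c) :
    ∃ C ≠ ∞, ∀ x : E, ∫⁻ y, ‖weightedRieszKernel a β c x y‖ₑ *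
        ENNReal.ofReal (japaneseBracket y ^ (-(finrank ℝ E / 2 : ℝ))) ∂μ ≤
      C * ENNReal.ofReal (japaneseBracket x ^ (-(finrank ℝ E / 2 : ℝ))) := by
  set n : ℝ := (finrank ℝ E : ℝ)
  obtain ⟨C, hC, hconv⟩ := lintegral_rpow_neg_norm_sub_mul_japaneseBracket_le μ
    (ν := c + n / 2) hβ₀ hβ (by linarith) (by linarith) (by linarith)
  refine ⟨C, hC, fun x => ?_⟩
  have hx := japaneseBracket_pos x
  have hsplit : ∀ y, ‖weightedRieszKernel a β c x y‖ₑ *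
      ENNReal.ofReal (japaneseBracket y ^ (-(n / 2))) =
      ENNReal.ofReal (japaneseBracket x ^ (-a)) *
        ENNReal.ofReal (‖x - y‖ ^ (-β) * japaneseBracket y ^ (-(c + n / 2))) := fun y => by
    have hy := japaneseBracket_pos y
    rw [weightedRieszKernel, Real.enorm_eq_ofReal (by positivity),
      ← ENNReal.ofReal_mul (by positivity), ← ENNReal.ofReal_mul (by positivity), neg_add,
      Real.rpow_add hy]
    ring_nf
  simp_rw [hsplit]
  rw [lintegral_const_mul' _ _ ENNReal.ofReal_ne_top]
  calc _ ≤ ENNReal.ofReal (japaneseBracket x ^ (-a)) *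
        (C * ENNReal.ofReal (japaneseBracket x ^ (n - β - (c + n / 2)))) := by
        gcongr
        exact hconv x
    _ = C * ENNReal.ofReal (japaneseBracket x ^ (-a + (n - β - (c + n / 2)))) := by
        rw [Real.rpow_add hx, ENNReal.ofReal_mul (by positivity)]
        ring
    _ ≤ C * ENNReal.ofReal (japaneseBracket x ^ (-(n / 2))) := by
        gcongr C * ENNReal.ofReal ?_
        exact Real.rpow_le_rpow_of_exponent_le (one_le_japaneseBracket x) (by linarith)

end WeightedRieszKernel

theorem weighted_kernel_L2_bounded_general
    (d : ℕ) (α β γ : ℝ)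
    (hα' : α < d / 2)
    (hγ' : γ < d / 2)
    (hβ : 0 < β) (hβ' : β < d)
    (hαβγ : (d : ℝ) < α + β + γ) :
    ∃ C > 0, ∀ u : EuclideanSpace ℝ (Fin d) → ℝ, MemLp u 2 volume →
      eLpNorm
        (fun x : EuclideanSpace ℝ (Fin d) =>
          ∫ y : EuclideanSpace ℝ (Fin d),
            ((1 + ‖x‖ ^ 2) ^ (-α / 2) * ‖x - y‖ ^ (-β) *
              (1 + ‖y‖ ^ 2) ^ (-γ / 2) : ℝ) * u y) 2 volume
      ≤ ENNReal.ofReal C * eLpNorm u 2 volume := by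
  have hfinrank : (finrank ℝ (EuclideanSpace ℝ (Fin d)) : ℝ) = d := by simp
  obtain ⟨A, hA, h₁⟩ := lintegral_enorm_weightedRieszKernel_mul_le volume (a := α) (c := γ)
    hβ (by rwa [hfinrank]) (by rwa [hfinrank]) (by rw [hfinrank]; linarith)
    (by rw [hfinrank]; linarith)
  obtain ⟨B, hB, h₂⟩ := lintegral_enorm_weightedRieszKernel_mul_le volume (a := γ) (c := α)
    hβ (by rwa [hfinrank]) (by rwa [hfinrank]) (by rw [hfinrank]; linarith)
    (by rw [hfinrank]; linarith)
  simp_rw [← weightedRieszKernel_swap α β γ] at h₂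
  refine ⟨((A * B) ^ (2⁻¹ : ℝ)).toReal + 1, by positivity, fun u hu => ?_⟩
  calc _ = eLpNorm (fun x => ∫ y, weightedRieszKernel α β γ x y • u y) 2 volume := by
        simp only [weightedRieszKernel, one_add_norm_sq_rpow_half, smul_eq_mul]
    _ ≤ (A * B) ^ (2⁻¹ : ℝ) * eLpNorm u 2 volume :=
        eLpNorm_integral_smul_le_of_schur (by unfold weightedRieszKernel; fun_prop) (by fun_prop)
          (fun x => (ENNReal.ofReal_pos.mpr (Real.rpow_pos_of_pos (japaneseBracket_pos x) _)).ne')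
          (fun _ => ENNReal.ofReal_ne_top) h₁ h₂ hu.aestronglyMeasurable
    _ ≤ ENNReal.ofReal (((A * B) ^ (2⁻¹ : ℝ)).toReal + 1) * eLpNorm u 2 volume := by
        gcongr
        exact (ENNReal.le_ofReal_iff_toReal_le (by finiteness) (by positivity)).mpr
          (le_add_of_nonneg_right zero_le_one)

/-- **Boundedness of the weighted Riesz-type kernel on `L²(ℝ^d)`.**
For `0 < α, γ < d/2`, `0 < β < d` with `d/2 < α + β < d` and `α + β + γ > d`,
the integral operator with kernel
`k(x,y) = ⟨x⟩^{-α} |x-y|^{-β} ⟨y⟩^{-γ}` (where `⟨x⟩ = (1+|x|²)^{1/2}`)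
is bounded on `L²(ℝ^d)`. -/
theorem weighted_kernel_L2_bounded
    (d : ℕ) (hd : 1 ≤ d) (α β γ : ℝ)
    (hα : 0 < α) (hα' : α < d / 2)
    (hγ : 0 < γ) (hγ' : γ < d / 2)
    (hβ : 0 < β) (hβ' : β < d)
    (hαβ : d / 2 < α + β) (hαβ' : α + β < d)
    (hαβγ : (d : ℝ) < α + β + γ) :
    ∃ C > 0, ∀ u : EuclideanSpace ℝ (Fin d) → ℝ, MemLp u 2 volume →
      eLpNorm
        (fun x : EuclideanSpace ℝ (Fin d) =>
          ∫ y : EuclideanSpace ℝ (Fin d),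
            ((1 + ‖x‖ ^ 2) ^ (-α / 2) * ‖x - y‖ ^ (-β) *
              (1 + ‖y‖ ^ 2) ^ (-γ / 2) : ℝ) * u y) 2 volume
      ≤ ENNReal.ofReal C * eLpNorm u 2 volume :=
  weighted_kernel_L2_bounded_general d α β γ hα' hγ' hβ hβ' hαβγ
end

section
/- Let G₀, G be self-adjoint with V = G₀ - G and write R(z)=(G-z)^{-1}, R₀(z)=(G₀-z)^{-1}. For every k ≥ 1 and z ∈ ℂ∖ℝ, R^k(z) can be written as a finite sum of products M₀ V M₁ V ⋯ V Mₙ where M₀ = R₀^{α₀}(z), Mₙ = R₀^{αₙ}(z), and each intermediate Mⱼ equals either R(z) (with αⱼ = 1) or R₀^{αⱼ}(z), such that all exponents satisfy 0 < αⱼ ≤ k, αⱼ + α_{j+1} ≤ k+1 for consecutive indices, and Σⱼ₌₀ⁿ αⱼ = n + k. -/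
/-!
Two applications of the second resolvent identity give `R = R₀ + R₀ V R₀ + R₀ V R V R₀`.
Hence `R` times a word `R₀^a V M₁ V ⋯` is the sum of the three words obtained by replacing its
first factor with `R₀^(a+1)`, `R₀ V R₀^(a+1)` and `R₀ V R V R₀^(a+1)`. Each of these has exactly
one more unit of exponent than new factors, so `Σ αⱼ = n + k` passes to `k + 1`, and the bounds
survive because the only exponent that grows is the first, by one. Starting from `R = R · R₀^0`,
induction on `k` gives the expansion.
-/

open ContinuousLinearMap

/-- A factor `Mⱼ` in the expansion: `none` stands for the perturbed resolvent
`R(z)` (with exponent `αⱼ = 1`), `some a` stands for the free resolvent power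
`R₀(z)^a`. -/
def factorOf {A : Type*} [Ring A] (R R₀ : A) : Option ℕ → A
  | none => R
  | some a => R₀ ^ a

/-- The product `M₀ V M₁ V ⋯ V Mₙ` associated to a word. -/
def wordProd {A : Type*} [Ring A] (R R₀ V : A) (w : List (Option ℕ)) : A :=
  ((w.map (factorOf R R₀)).intersperse V).prod

/-- The exponent `αⱼ` of a factor. -/
def expOf : Option ℕ → ℕ
  | none => 1
  | some a => a

/-- The admissibility conditions on a word: it is nonempty, the first and last
factors are free resolvent powers, all exponents satisfy `0 < αⱼ ≤ k`,
consecutive exponents satisfy `αⱼ + α_{j+1} ≤ k + 1`, and `Σⱼ₌₀ⁿ αⱼ = n + k`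
(where `n + 1` is the number of factors). -/
def ValidWord (k : ℕ) (w : List (Option ℕ)) : Prop :=
  w ≠ [] ∧ (∃ a, w.head? = some (some a)) ∧ (∃ a, w.getLast? = some (some a)) ∧
    (∀ o ∈ w, 0 < expOf o ∧ expOf o ≤ k) ∧
    (∀ p ∈ (w.map expOf).zip (w.map expOf).tail, p.1 + p.2 ≤ k + 1) ∧
    (w.map expOf).sum = (w.length - 1) + k

theorem IsSelfAdjoint.isUnit_sub_smul_one {A : Type*} [CStarAlgebra A] {a : A}
    (ha : IsSelfAdjoint a) {z : ℂ} (hz : z.im ≠ 0) : IsUnit (a - z • (1 : A)) := by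
  have hunit := spectrum.notMem_iff.mp fun h => hz (ha.im_eq_zero_of_mem_spectrum h)
  simpa [Algebra.algebraMap_eq_smul_one] using hunit.neg

theorem Ring.inverse_eq_add_add_of_isUnit {A : Type*} [Ring A] {a b : A} (ha : IsUnit a)
    (hb : IsUnit b) :
    Ring.inverse a = Ring.inverse b + Ring.inverse b * (b - a) * Ring.inverse b +
      Ring.inverse b * (b - a) * Ring.inverse a * (b - a) * Ring.inverse b := by
  have h₁ : Ring.inverse a = Ring.inverse b + Ring.inverse b * (b - a) * Ring.inverse a := by
    have hba := Ring.inverse_sub_inverse (iff_of_true hb ha)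
    conv_lhs => rw [← sub_sub_cancel (Ring.inverse b) (Ring.inverse a), hba]
    noncomm_ring
  have h₂ : Ring.inverse a = Ring.inverse b + Ring.inverse a * (b - a) * Ring.inverse b :=
    eq_add_of_sub_eq' (Ring.inverse_sub_inverse (iff_of_true ha hb))
  calc Ring.inverse a = Ring.inverse b + Ring.inverse b * (b - a) * Ring.inverse a := h₁
    _ = Ring.inverse b + Ring.inverse b * (b - a) *
          (Ring.inverse b + Ring.inverse a * (b - a) * Ring.inverse b) := by rw [← h₂]
    _ = _ := by noncomm_ring

section ValidWord

variable {k a : ℕ} {t w : List (Option ℕ)}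

theorem ValidWord.exists_eq_some_cons (hw : ValidWord k w) : ∃ a t, w = some a :: t := by
  obtain ⟨-, ⟨a, hhead⟩, -⟩ := hw
  cases w with
  | nil => simp at hhead
  | cons o t => exact ⟨a, t, by simpa using hhead⟩

theorem validWord_one_singleton : ValidWord 1 [some 1] := by
  simp [ValidWord, expOf]

theorem ValidWord.succ_head (hw : ValidWord k (some a :: t)) :
    ValidWord (k + 1) (some (a + 1) :: t) := by
  obtain ⟨-, -, hlast, hbnd, hadj, hsum⟩ := hw
  refine ⟨List.cons_ne_nil _ _, ⟨a + 1, rfl⟩, ?_, ?_, ?_, ?_⟩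
  · cases t <;> simp_all
  · simp only [List.forall_mem_cons, expOf] at hbnd ⊢
    exact ⟨by omega, fun o ho => ⟨(hbnd.2 o ho).1, (hbnd.2 o ho).2.trans k.le_succ⟩⟩
  · cases t with
    | nil => simp
    | cons o t =>
      simp only [List.map_cons, List.tail_cons, List.zip_cons_cons, List.forall_mem_cons,
        expOf] at hadj ⊢
      exact ⟨by omega, fun p hp => (hadj.2 p hp).trans (by omega)⟩
  · simp only [List.map_cons, List.sum_cons, List.length_cons, expOf] at hsum ⊢
    omega

theorem ValidWord.cons_one (hk : 1 ≤ k) (hw : ValidWord k w) : ValidWord k (some 1 :: w) := by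
  obtain ⟨a, t, rfl⟩ := hw.exists_eq_some_cons
  obtain ⟨-, -, hlast, hbnd, hadj, hsum⟩ := hw
  refine ⟨List.cons_ne_nil _ _, ⟨1, rfl⟩, by simpa [List.getLast?_cons_cons] using hlast, ?_⟩
  simp_all only [List.map_cons, List.forall_mem_cons, List.tail_cons, List.zip_cons_cons,
    List.sum_cons, List.length_cons, expOf, and_true, implies_true, Nat.add_sub_cancel]
  omega

theorem ValidWord.cons_one_none (hk : 1 ≤ k) (hw : ValidWord k w) :
    ValidWord k (some 1 :: none :: w) := by
  obtain ⟨a, t, rfl⟩ := hw.exists_eq_some_cons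
  obtain ⟨-, -, hlast, hbnd, hadj, hsum⟩ := hw
  refine ⟨List.cons_ne_nil _ _, ⟨1, rfl⟩, by simpa [List.getLast?_cons_cons] using hlast, ?_⟩
  simp_all only [List.map_cons, List.forall_mem_cons, List.tail_cons, List.zip_cons_cons,
    List.sum_cons, List.length_cons, expOf, and_true, implies_true, Nat.add_sub_cancel]
  omega

def leftMulWords (a : ℕ) (t : List (Option ℕ)) : List (List (Option ℕ)) :=
  [some (a + 1) :: t, some 1 :: some (a + 1) :: t, some 1 :: none :: some (a + 1) :: t]

theorem ValidWord.forall_mem_leftMulWords (hk : 1 ≤ k) (hw : ValidWord k (some (a + 1) :: t)) :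
    ∀ w ∈ leftMulWords a t, ValidWord k w := by
  simpa [leftMulWords] using ⟨hw, hw.cons_one hk, hw.cons_one_none hk⟩

end ValidWord

section WordProd

variable {A : Type*} [Ring A] {R R₀ V : A}

theorem wordProd_singleton (o : Option ℕ) : wordProd R R₀ V [o] = factorOf R R₀ o := by
  simp [wordProd]

theorem wordProd_cons_cons (o o' : Option ℕ) (t : List (Option ℕ)) :
    wordProd R R₀ V (o :: o' :: t) = factorOf R R₀ o * V * wordProd R R₀ V (o' :: t) := by
  simp [wordProd, mul_assoc]

theorem wordProd_some_succ_cons (a : ℕ) (t : List (Option ℕ)) :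
    wordProd R R₀ V (some (a + 1) :: t) = R₀ * wordProd R R₀ V (some a :: t) := by
  cases t <;> simp [wordProd_singleton, wordProd_cons_cons, factorOf, pow_succ', mul_assoc]

theorem mul_wordProd_some_cons (hR : R = R₀ + R₀ * V * R₀ + R₀ * V * R * V * R₀) (a : ℕ)
    (t : List (Option ℕ)) :
    R * wordProd R R₀ V (some a :: t) = ((leftMulWords a t).map (wordProd R R₀ V)).sum := by
  simp only [leftMulWords, List.map_cons, List.map_nil, List.sum_cons, List.sum_nil, add_zero,
    wordProd_cons_cons, wordProd_some_succ_cons, factorOf, pow_one]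
  generalize wordProd R R₀ V (some a :: t) = W
  conv_lhs => rw [hR]
  noncomm_ring

theorem exists_validWord_mul_sum (hR : R = R₀ + R₀ * V * R₀ + R₀ * V * R * V * R₀) {k : ℕ}
    {ws : List (List (Option ℕ))} (hws : ∀ w ∈ ws, ValidWord k w) :
    ∃ ws' : List (List (Option ℕ)), (∀ w ∈ ws', ValidWord (k + 1) w) ∧
      R * (ws.map (wordProd R R₀ V)).sum = (ws'.map (wordProd R R₀ V)).sum := by
  induction ws with
  | nil => exact ⟨[], by simp⟩
  | cons w ws ih =>
    obtain ⟨hw, hws_tail⟩ := List.forall_mem_cons.mp hws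
    obtain ⟨a, t, rfl⟩ := hw.exists_eq_some_cons
    obtain ⟨ws', hws', hsum⟩ := ih hws_tail
    refine ⟨leftMulWords a t ++ ws', List.forall_mem_append.mpr
      ⟨hw.succ_head.forall_mem_leftMulWords (by omega), hws'⟩, ?_⟩
    rw [List.map_cons, List.sum_cons, mul_add, mul_wordProd_some_cons hR, hsum, List.map_append,
      List.sum_append]

theorem exists_validWord_pow_eq_sum (hR : R = R₀ + R₀ * V * R₀ + R₀ * V * R * V * R₀) {k : ℕ}
    (hk : 1 ≤ k) :
    ∃ ws : List (List (Option ℕ)), (∀ w ∈ ws, ValidWord k w) ∧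
      R ^ k = (ws.map (wordProd R R₀ V)).sum := by
  induction k, hk using Nat.le_induction with
  | base =>
    refine ⟨leftMulWords 0 [], validWord_one_singleton.forall_mem_leftMulWords le_rfl, ?_⟩
    simpa [wordProd_singleton, factorOf] using mul_wordProd_some_cons hR 0 []
  | succ k _ ih =>
    obtain ⟨ws, hws, hsum⟩ := ih
    obtain ⟨ws', hws', hsum'⟩ := exists_validWord_mul_sum hR hws
    exact ⟨ws', hws', by rw [pow_succ', hsum, hsum']⟩

end WordProd

/-- **Expansion of powers of the perturbed resolvent.**  With `R(z) = (G-z)^{-1}`,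
`R₀(z) = (G₀-z)^{-1}`, `V = G₀ - G`, for every `k ≥ 1` and nonreal `z`, `R(z)^k`
is a finite sum of products `M₀ V M₁ V ⋯ V Mₙ` where each `Mⱼ` is `R(z)` or a
power `R₀(z)^{αⱼ}`, the first and last factors being powers of `R₀(z)`, with
`0 < αⱼ ≤ k`, `αⱼ + α_{j+1} ≤ k+1` and `Σ αⱼ = n + k`. -/
theorem resolvent_power_expansion
    {H : Type*} [NormedAddCommGroup H] [InnerProductSpace ℂ H] [CompleteSpace H]
    (G G₀ : H →L[ℂ] H) (hG : IsSelfAdjoint G) (hG₀ : IsSelfAdjoint G₀)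
    (V : H →L[ℂ] H) (hV : V = G₀ - G)
    (z : ℂ) (hz : z.im ≠ 0) (k : ℕ) (hk : 1 ≤ k)
    (R R₀ : H →L[ℂ] H)
    (hR : R = Ring.inverse (G - z • (1 : H →L[ℂ] H)))
    (hR₀ : R₀ = Ring.inverse (G₀ - z • (1 : H →L[ℂ] H))) :
    ∃ ws : List (List (Option ℕ)),
      (∀ w ∈ ws, ValidWord k w) ∧
        R ^ k = (ws.map (wordProd R R₀ V)).sum := by
  have hresolvent : R = R₀ + R₀ * V * R₀ + R₀ * V * R * V * R₀ := by
    subst hR hR₀ hV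
    rw [← sub_sub_sub_cancel_right G₀ G (z • 1)]
    exact Ring.inverse_eq_add_add_of_isUnit (hG.isUnit_sub_smul_one hz)
      (hG₀.isUnit_sub_smul_one hz)
  exact exists_validWord_pow_eq_sum hresolvent hk
end
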